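/- For every s ∈ ℕ, the s-fold composition g_s of the triangular function g (where g(x) = 2x on [0,1/2] and g(x) = 2−2x on [1/2,1]) can be realized exactly by a fully connected feedforward ReLU network of size 3s + 1 and depth s + 1. -/
import Mathlib


open MeasureTheory Set ENNReal

noncomputable section

/-- Coordinatewise ReLU activation. -/
def relu {m : ℕ} (x : Fin m → ℝ) : Fin m → ℝ := fun i => max 0 (x i)

/-- `M` is an affine map `ℝ^m → ℝ^k`. -/
def IsAffineMap {m k : ℕ} (M : (Fin m → ℝ) → (Fin k → ℝ)) : Prop :=
  ∃ (A : Matrix (Fin k) (Fin m) ℝ) (b : Fin k → ℝ), ∀ x, M x = A.mulVec x + b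

/-- `RealizedBy L m0 mL φ N` : the map `φ : ℝ^{m0} → ℝ^{mL}` is a fully connected feedforward
ReLU network of depth `L` and size `N`, i.e. `φ = M_L ∘ ReLU ∘ M_{L-1} ∘ ⋯ ∘ ReLU ∘ M_1` for
affine maps `M_i : ℝ^{m_{i-1}} → ℝ^{m_i}` with `m_1, …, m_{L-1} > 0` and `N = m_1 + ⋯ + m_L`. -/
def RealizedBy : (L : ℕ) → (m0 mL : ℕ) → ((Fin m0 → ℝ) → (Fin mL → ℝ)) → ℕ → Prop
  | 0, _, _, _, _ => False
  | 1, _, mL, φ, N => IsAffineMap φ ∧ N = mL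
  | (L + 2), m0, mL, φ, N =>
      ∃ (m1 : ℕ) (M1 : (Fin m0 → ℝ) → (Fin m1 → ℝ))
        (ψ : (Fin m1 → ℝ) → (Fin mL → ℝ)) (N' : ℕ),
        0 < m1 ∧ IsAffineMap M1 ∧ RealizedBy (L + 1) m1 mL ψ N' ∧
        N = m1 + N' ∧ ∀ x, φ x = ψ (relu (M1 x))

/-- The triangular function `g(x) = 2x` on `[0,1/2]`, `g(x) = 2 - 2x` on `[1/2,1]`. -/
def g : ℝ → ℝ := fun x => if x ≤ 1 / 2 then 2 * x else 2 - 2 * x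

lemma isAffine_comp {m k l : ℕ} {f : (Fin k → ℝ) → (Fin l → ℝ)}
    {h : (Fin m → ℝ) → (Fin k → ℝ)}
    (hf : IsAffineMap f) (hh : IsAffineMap h) : IsAffineMap (fun x => f (h x)) := by
  obtain ⟨A, b, hA⟩ := hf
  obtain ⟨C, d, hC⟩ := hh
  refine ⟨A * C, A.mulVec d + b, fun x => ?_⟩
  simp [hA, hC, Matrix.mulVec_add, Matrix.mulVec_mulVec, add_assoc]

lemma realizedBy_precomp : ∀ (L m1 m0 mL N : ℕ)
    (ψ : (Fin m1 → ℝ) → (Fin mL → ℝ)) (A : (Fin m0 → ℝ) → (Fin m1 → ℝ)),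
    RealizedBy L m1 mL ψ N → IsAffineMap A → RealizedBy L m0 mL (fun x => ψ (A x)) N
  | 0, _, _, _, _, _, _, h, _ => h.elim
  | 1, _, _, _, _, _, _, ⟨hψ, hN⟩, hA => ⟨isAffine_comp hψ hA, hN⟩
  | (L+2), m1, m0, mL, N, ψ, A, ⟨m1', M1, ψ', N', hm, hM1, hψ', hN, hcomp⟩, hA =>
    ⟨m1', fun x => M1 (A x), ψ', N', hm, isAffine_comp hM1 hA, hψ', hN,
      fun x => hcomp (A x)⟩

lemma g_mem (x : ℝ) (hx : x ∈ Set.Icc (0:ℝ) 1) : g x ∈ Set.Icc (0:ℝ) 1 := by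
  obtain ⟨h0, h1⟩ := hx
  unfold g
  split <;> constructor <;> linarith

lemma g_relu (x : ℝ) (hx : x ∈ Set.Icc (0:ℝ) 1) :
    2 * max 0 x - 4 * max 0 (x - 1/2) = g x := by
  obtain ⟨h0, h1⟩ := hx
  unfold g
  rcases le_or_gt x (1/2) with h | h
  · rw [if_pos h, max_eq_right h0, max_eq_left (by linarith)]
    ring
  · rw [if_neg (not_le.mpr h), max_eq_right h0, max_eq_right (by linarith)]
    ring

theorem sawtooth_realization (s : ℕ) :
    ∃ φ : (Fin 1 → ℝ) → (Fin 1 → ℝ), RealizedBy (s + 1) 1 1 φ (3 * s + 1) ∧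
      ∀ x ∈ Set.Icc (0 : ℝ) 1, φ (fun _ => x) 0 = g^[s] x := by
  induction s with
  | zero =>
    refine ⟨id, ⟨⟨1, 0, fun x => by simp⟩, rfl⟩, fun x hx => by simp⟩
  | succ s ih =>
    obtain ⟨φ, hφ, hval⟩ := ih
    -- first layer : x ↦ (x, x - 1/2, 0)
    set M1 : (Fin 1 → ℝ) → (Fin 3 → ℝ) := fun x => ![x 0, x 0 - 1/2, 0] with hM1def
    have hM1 : IsAffineMap M1 := by
      refine ⟨Matrix.of ![![1], ![1], ![0]], ![0, -(1/2), 0], fun x => ?_⟩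
      funext i
      fin_cases i <;>
        simp [hM1def, Matrix.mulVec, dotProduct, Fin.sum_univ_one] <;> ring
    -- affine map collapsing the hidden layer : u ↦ 2 u₀ - 4 u₁
    set A : (Fin 3 → ℝ) → (Fin 1 → ℝ) := fun u => fun _ => 2 * u 0 - 4 * u 1 with hAdef
    have hA : IsAffineMap A := by
      refine ⟨Matrix.of ![![2, -4, 0]], 0, fun u => ?_⟩
      funext i
      fin_cases i
      simp [hAdef, Matrix.mulVec, dotProduct, Fin.sum_univ_three]
      ring
    refine ⟨fun x => φ (A (relu (M1 x))), ?_, ?_⟩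
    · refine ⟨3, M1, fun u => φ (A u), 3 * s + 1, by norm_num, hM1,
        realizedBy_precomp (s+1) 1 3 1 (3*s+1) φ A hφ hA, by ring, fun x => rfl⟩
    · intro x hx
      have key : A (relu (M1 (fun _ => x))) = fun _ => g x := by
        funext i
        simp only [hAdef, hM1def, relu]
        show 2 * max 0 (![x, x - 1/2, 0] 0) - 4 * max 0 (![x, x - 1/2, 0] 1) = g x
        simpa using g_relu x hx
      show φ (A (relu (M1 (fun _ => x)))) 0 = g^[s+1] x
      rw [key, hval (g x) (g_mem x hx), Function.iterate_succ_apply]
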